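/- In a 2-dimensional C-WMMG, let C_1 and C_2 be minimal winning coalitions and suppose there are players x and y with x ∈ A_1(C_1) ∩ A_1(C_2) and y ∈ A_2(C_1) ∩ A_2(C_2). If for some t ∈ {1, 2} both |A_t(C_1)| = 1 and |A_t(C_2)| = 1, then C_1 = C_2. -/

import Mathlib

def q {P : Type*} [DecidableEq P] (w1 w2 : P → ℕ) (C : Finset P) : ℕ :=
  C.sup w1 + C.sup w2

def Winning {P : Type*} [Fintype P] [DecidableEq P] (w1 w2 : P → ℕ) (C : Finset P) : Prop :=
  q w1 w2 Cᶜ < q w1 w2 C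

def MWC {P : Type*} [Fintype P] [DecidableEq P] (w1 w2 : P → ℕ) (C : Finset P) : Prop :=
  Winning w1 w2 C ∧ ∀ D ⊂ C, ¬ Winning w1 w2 D

def Aset {P : Type*} [DecidableEq P] (w : P → ℕ) (C : Finset P) : Finset P :=
  C.filter (fun j => w j = C.sup w)

/-!
By symmetry of the two dimensions, say `A_1(C₁) = A_1(C₂) = {x}`, and suppose some `z ∈ C₁`
lies outside `C₂`. Then `z ≠ x, y`, so removing `z` from `C₁` keeps its power
`Q = w1 x + w2 y`, and by minimality `C₁ ∖ {z}` loses: `Q ≤ max (w1 z) a + max (w2 z) b`, where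
`a, b` are the maxima over `N ∖ C₁`. Here `w1 z + w2 z < Q` since `x` is the unique maximum, and
`a + b < Q` since `C₁` wins, so the right-hand side is `a + w2 z` with `a ≥ w1 x`, or
`w1 z + b` with `b > w2 y`. But a player outside `C₁` that is at least as strong as `x` in the
first dimension, or stronger than `y` in the second, also lies outside `C₂`, as does `z`; hence
`Q ≤ q(N ∖ C₂)`, contradicting that `C₂` wins.
-/

open Finset

section Aset

variable {P : Type*} [DecidableEq P] {w : P → ℕ} {C : Finset P} {x z : P}

lemma mem_Aset : x ∈ Aset w C ↔ x ∈ C ∧ w x = C.sup w :=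
  mem_filter

lemma eq_of_mem_Aset_of_card_eq_one (hA : (Aset w C).card = 1) (hx : x ∈ Aset w C)
    (hz : z ∈ C) (hxz : w x ≤ w z) : z = x := by
  have hzA : z ∈ Aset w C :=
    mem_Aset.2 ⟨hz, le_antisymm (le_sup hz) ((mem_Aset.1 hx).2 ▸ hxz)⟩
  exact card_le_one.1 hA.le z hzA x hx

lemma mem_Aset_erase (hx : x ∈ Aset w C) (hzx : z ≠ x) : x ∈ Aset w (C.erase z) := by
  obtain ⟨hxC, hxw⟩ := mem_Aset.1 hx
  have hxD : x ∈ C.erase z := mem_erase.2 ⟨hzx.symm, hxC⟩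
  exact mem_Aset.2 ⟨hxD, le_antisymm (le_sup hxD) (hxw ▸ sup_mono (erase_subset z C))⟩

lemma q_eq_of_mem_Aset {w1 w2 : P → ℕ} {y : P} (hx : x ∈ Aset w1 C) (hy : y ∈ Aset w2 C) :
    q w1 w2 C = w1 x + w2 y := by
  rw [q, (mem_Aset.1 hx).2, (mem_Aset.1 hy).2]

end Aset

lemma Finset.sup_lt_or_sup_le_sup {P : Type*} {S T : Finset P} {w : P → ℕ} {θ : ℕ}
    (h : ∀ u ∈ S, θ ≤ w u → u ∈ T) : S.sup w < θ ∨ S.sup w ≤ T.sup w := by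
  rcases S.eq_empty_or_nonempty with rfl | hS
  · exact Or.inr (by simp)
  obtain ⟨u, hu, hsup⟩ := exists_mem_eq_sup S hS w
  rw [hsup]
  exact (lt_or_ge (w u) θ).imp_right fun hθ => le_sup (h u hu hθ)

namespace MWC

variable {P : Type*} [Fintype P] [DecidableEq P] {w1 w2 : P → ℕ} {C : Finset P}

lemma swap (h : MWC w1 w2 C) : MWC w2 w1 C := by
  simpa only [MWC, Winning, q, add_comm] using h

lemma q_le_q_insert_compl (h : MWC w1 w2 C) {x y z : P} (hz : z ∈ C)
    (hx : x ∈ Aset w1 C) (hy : y ∈ Aset w2 C) (hzx : z ≠ x) (hzy : z ≠ y) :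
    q w1 w2 C ≤ q w1 w2 (insert z Cᶜ) := by
  have hlose := h.2 (C.erase z) (erase_ssubset hz)
  rwa [Winning, not_lt, compl_erase,
    q_eq_of_mem_Aset (mem_Aset_erase hx hzx) (mem_Aset_erase hy hzy),
    ← q_eq_of_mem_Aset hx hy] at hlose

lemma subset_of_card_Aset_eq_one {C₁ C₂ : Finset P} (h1 : MWC w1 w2 C₁) (h2 : MWC w1 w2 C₂)
    {x y : P} (hx1 : x ∈ Aset w1 C₁) (hx2 : x ∈ Aset w1 C₂)
    (hy1 : y ∈ Aset w2 C₁) (hy2 : y ∈ Aset w2 C₂)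
    (hs1 : (Aset w1 C₁).card = 1) (hs2 : (Aset w1 C₂).card = 1) : C₁ ⊆ C₂ := by
  intro z hz
  by_contra hzC₂
  have hzx : z ≠ x := fun h => hzC₂ (h ▸ (mem_Aset.1 hx2).1)
  have hzy : z ≠ y := fun h => hzC₂ (h ▸ (mem_Aset.1 hy2).1)
  have hlose := h1.q_le_q_insert_compl hz hx1 hy1 hzx hzy
  have hwin1 := h1.1
  have hwin2 := h2.1
  rw [Winning, q_eq_of_mem_Aset hx1 hy1, q] at hwin1
  rw [Winning, q_eq_of_mem_Aset hx2 hy2, q] at hwin2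
  rw [q_eq_of_mem_Aset hx1 hy1, q, sup_insert, sup_insert] at hlose
  have hxz : w1 z < w1 x :=
    lt_of_not_ge fun h => hzx (eq_of_mem_Aset_of_card_eq_one hs1 hx1 hz h)
  have hyz : w2 z ≤ w2 y := (mem_Aset.1 hy1).2 ▸ le_sup hz
  have hz1 : w1 z ≤ C₂ᶜ.sup w1 := le_sup (mem_compl.2 hzC₂)
  have hz2 : w2 z ≤ C₂ᶜ.sup w2 := le_sup (mem_compl.2 hzC₂)
  have ha : C₁ᶜ.sup w1 < w1 x ∨ C₁ᶜ.sup w1 ≤ C₂ᶜ.sup w1 := by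
    refine sup_lt_or_sup_le_sup fun u hu hxu => mem_compl.2 fun hu2 => mem_compl.1 hu ?_
    exact eq_of_mem_Aset_of_card_eq_one hs2 hx2 hu2 hxu ▸ (mem_Aset.1 hx1).1
  have hb : C₁ᶜ.sup w2 < w2 y + 1 ∨ C₁ᶜ.sup w2 ≤ C₂ᶜ.sup w2 := by
    refine sup_lt_or_sup_le_sup fun u _ hyu => mem_compl.2 fun hu2 => ?_
    have := (mem_Aset.1 hy2).2 ▸ le_sup (f := w2) hu2
    omega
  omega

end MWC

/-- In a 2-dim C-WMMG, if `C₁, C₂` are minimal winning coalitions with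
`x ∈ A_1(C₁) ∩ A_1(C₂)`, `y ∈ A_2(C₁) ∩ A_2(C₂)`, and for some `t ∈ {1,2}` both
`|A_t(C₁)| = 1` and `|A_t(C₂)| = 1`, then `C₁ = C₂`. -/
theorem mwc_eq_of_singleton_busy_dim {P : Type*} [Fintype P] [DecidableEq P]
    (w1 w2 : P → ℕ) (C₁ C₂ : Finset P)
    (h1 : MWC w1 w2 C₁) (h2 : MWC w1 w2 C₂) (x y : P)
    (hx : x ∈ Aset w1 C₁ ∩ Aset w1 C₂) (hy : y ∈ Aset w2 C₁ ∩ Aset w2 C₂)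
    (ht : ((Aset w1 C₁).card = 1 ∧ (Aset w1 C₂).card = 1) ∨
          ((Aset w2 C₁).card = 1 ∧ (Aset w2 C₂).card = 1)) :
    C₁ = C₂ := by
  obtain ⟨hx1, hx2⟩ := mem_inter.1 hx
  obtain ⟨hy1, hy2⟩ := mem_inter.1 hy
  rcases ht with ⟨hs1, hs2⟩ | ⟨hs1, hs2⟩
  · exact Subset.antisymm (h1.subset_of_card_Aset_eq_one h2 hx1 hx2 hy1 hy2 hs1 hs2)
      (h2.subset_of_card_Aset_eq_one h1 hx2 hx1 hy2 hy1 hs2 hs1)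
  · exact Subset.antisymm
      (h1.swap.subset_of_card_Aset_eq_one h2.swap hy1 hy2 hx1 hx2 hs1 hs2)
      (h2.swap.subset_of_card_Aset_eq_one h1.swap hy2 hy1 hx2 hx1 hs2 hs1)
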